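/- arXiv:2104.06922 — 5 statements merged into one kernel-verified Lean document; each statement's English description precedes it below -/
import Mathlib

section
/- For a finite MDP with discount γ ∈ [0,1), arbitrary bounded function f: S → R, policy π, and transition kernel P, the expected discounted return satisfies J(π) = E_{s∼μ}[f(s)] + (1/(1-γ)) E_{s∼d^π, a∼π, s'∼P}[r(s,a,s') + γ f(s') − f(s)]. -/
/-!
Write `E g` (`transitionSum`) for the expectation of `g(s, a, s')` under `s ∼ d, a ∼ π s, s' ∼ P s a`.
Since `π` and `P` are stochastic, `E[f(s)] = Σ_s d(s) f(s)`, and pairing the flow equation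
`d = (1 - γ) μ + γ d P^π` with `f` gives `Σ_s d(s) f(s) = (1 - γ) E_μ[f] + γ E[f(s')]`.
Hence `E[γ f(s') - f(s)] = -(1 - γ) E_μ[f]`, and adding it to `J = E[r] / (1 - γ)` yields the identity.
-/

open Finset

namespace MDP

variable {S A R : Type*} [Fintype S] [Fintype A] [CommRing R]

def transitionSum (d : S → R) (π : S → A → R) (P : S → A → S → R) (g : S → A → S → R) : R :=
  ∑ s, ∑ a, ∑ s', d s * π s a * P s a s' * g s a s'

variable {d : S → R} {π : S → A → R} {P : S → A → S → R}

lemma transitionSum_add_mul_sub (g : S → A → S → R) (c : R) (f : S → R) :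
    transitionSum d π P (fun s a s' => g s a s' + c * f s' - f s) =
      transitionSum d π P g + c * transitionSum d π P (fun _ _ s' => f s') -
        transitionSum d π P (fun s _ _ => f s) := by
  simp only [transitionSum, mul_add, mul_sub, sum_add_distrib, sum_sub_distrib, mul_sum]
  congr 1
  congr 1
  refine sum_congr rfl fun s _ => sum_congr rfl fun a _ => sum_congr rfl fun s' _ => ?_
  ring

lemma transitionSum_current (hπ1 : ∀ s, ∑ a, π s a = 1) (hP1 : ∀ s a, ∑ s', P s a s' = 1)
    (f : S → R) : transitionSum d π P (fun s _ _ => f s) = ∑ s, d s * f s := by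
  refine sum_congr rfl fun s _ => ?_
  calc ∑ a, ∑ s', d s * π s a * P s a s' * f s
      = ∑ a, π s a * (∑ s', P s a s') * (d s * f s) := by
        simp only [mul_sum, sum_mul]
        exact sum_congr rfl fun a _ => sum_congr rfl fun s' _ => by ring
    _ = d s * f s := by simp only [hP1, mul_one, ← sum_mul, hπ1, one_mul]

lemma sum_mul_eq_of_flow {γ : R} {μ : S → R}
    (hd : ∀ s, d s = (1 - γ) * μ s + γ * ∑ s₀, ∑ a, d s₀ * π s₀ a * P s₀ a s) (f : S → R) :
    ∑ s, d s * f s =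
      (1 - γ) * ∑ s, μ s * f s + γ * transitionSum d π P (fun _ _ s' => f s') := by
  have hswap : ∑ s, (∑ s₀, ∑ a, d s₀ * π s₀ a * P s₀ a s) * f s =
      transitionSum d π P (fun _ _ s' => f s') := by
    simp only [transitionSum, sum_mul]
    rw [sum_comm]
    exact sum_congr rfl fun s₀ _ => sum_comm
  rw [← hswap, mul_sum, mul_sum, ← sum_add_distrib]
  refine sum_congr rfl fun s _ => ?_
  rw [hd s]
  ring

end MDP

open MDP in
theorem stmt1_general {S A : Type*} [Fintype S] [Fintype A]
    (γ : ℝ) (hγ1 : γ < 1)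
    (π : S → A → ℝ) (hπ1 : ∀ s, ∑ a, π s a = 1)
    (P : S → A → S → ℝ)
    (hP1 : ∀ s a, ∑ s', P s a s' = 1)
    (μ : S → ℝ)
    (r : S → A → S → ℝ) (f : S → ℝ)
    (d : S → ℝ)
    (hd : ∀ s, d s = (1 - γ) * μ s + γ * ∑ s₀, ∑ a, d s₀ * π s₀ a * P s₀ a s)
    (J : ℝ)
    (hJ : J = (1 / (1 - γ)) * ∑ s, ∑ a, ∑ s', d s * π s a * P s a s' * r s a s') :
    J = (∑ s, μ s * f s) +
      (1 / (1 - γ)) *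
        ∑ s, ∑ a, ∑ s', d s * π s a * P s a s' * (r s a s' + γ * f s' - f s) := by
  have hne : 1 - γ ≠ 0 := sub_ne_zero.2 hγ1.ne'
  have hflow := sum_mul_eq_of_flow hd f
  change J = 1 / (1 - γ) * transitionSum d π P r at hJ
  change J = _ + 1 / (1 - γ) * transitionSum d π P (fun s a s' => r s a s' + γ * f s' - f s)
  rw [hJ, transitionSum_add_mul_sub, transitionSum_current hπ1 hP1]
  field_simp
  linear_combination hflow

/-- Telescoping return identity: for any bounded `f`,
`J(π) = E_{s∼μ}[f(s)] + (1/(1-γ)) E_{s∼d^π, a∼π, s'∼P}[r(s,a,s') + γ f(s') − f(s)]`. -/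
theorem stmt1 {S A : Type*} [Fintype S] [Fintype A]
    (γ : ℝ) (hγ0 : 0 ≤ γ) (hγ1 : γ < 1)
    (π : S → A → ℝ) (hπ0 : ∀ s a, 0 ≤ π s a) (hπ1 : ∀ s, ∑ a, π s a = 1)
    (P : S → A → S → ℝ) (hP0 : ∀ s a s', 0 ≤ P s a s')
    (hP1 : ∀ s a, ∑ s', P s a s' = 1)
    (μ : S → ℝ) (hμ0 : ∀ s, 0 ≤ μ s) (hμ1 : ∑ s, μ s = 1)
    (r : S → A → S → ℝ) (f : S → ℝ)
    (d : S → ℝ)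
    (hd : ∀ s, d s = (1 - γ) * μ s + γ * ∑ s₀, ∑ a, d s₀ * π s₀ a * P s₀ a s)
    (J : ℝ)
    (hJ : J = (1 / (1 - γ)) * ∑ s, ∑ a, ∑ s', d s * π s a * P s a s' * r s a s') :
    J = (∑ s, μ s * f s) +
      (1 / (1 - γ)) *
        ∑ s, ∑ a, ∑ s', d s * π s a * P s a s' * (r s a s' + γ * f s' - f s) :=
  stmt1_general γ hγ1 π hπ1 P hP1 μ r f d hd J hJ
end

section
/- State distribution shift bound: for finite S, A and any policies π, π' and transition kernels P, P_m, the L1 distance between the true stationary distribution under (π', P) and the model stationary distribution under (π, P_m) satisfies ‖d^{π'} − d^π_m‖_1 ≤ (2γ/(1-γ)) ( E_{s∼d^π_m}[D_TV(π'(·|s) ‖ π(·|s))] + E_{s∼d^π_m, a∼π}[D_TV(P(·|s,a) ‖ P_m(·|s,a))] ). -/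
/-- State distribution shift bound (Lemma A.1):
`‖d^{π'} − d^π_m‖₁ ≤ (2γ/(1-γ)) (E_{d^π_m}[D_TV(π'‖π)] + E_{d^π_m,π}[D_TV(P‖P_m)])`. -/
theorem stmt5 {S A : Type*} [Fintype S] [Fintype A]
    (γ : ℝ) (hγ0 : 0 ≤ γ) (hγ1 : γ < 1)
    (π π' : S → A → ℝ)
    (hπ0 : ∀ s a, 0 ≤ π s a) (hπ1 : ∀ s, ∑ a, π s a = 1)
    (hπ'0 : ∀ s a, 0 ≤ π' s a) (hπ'1 : ∀ s, ∑ a, π' s a = 1)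
    (P Pm : S → A → S → ℝ)
    (hP0 : ∀ s a s', 0 ≤ P s a s') (hP1 : ∀ s a, ∑ s', P s a s' = 1)
    (hPm0 : ∀ s a s', 0 ≤ Pm s a s') (hPm1 : ∀ s a, ∑ s', Pm s a s' = 1)
    (μ : S → ℝ) (hμ0 : ∀ s, 0 ≤ μ s) (hμ1 : ∑ s, μ s = 1)
    (d' dm : S → ℝ)
    (hd' : ∀ s, d' s = (1 - γ) * μ s + γ * ∑ s₀, ∑ a, d' s₀ * π' s₀ a * P s₀ a s)
    (hdm : ∀ s, dm s = (1 - γ) * μ s + γ * ∑ s₀, ∑ a, dm s₀ * π s₀ a * Pm s₀ a s) :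
    ∑ s, |d' s - dm s| ≤
      (2 * γ / (1 - γ)) *
        ((∑ s, dm s * ((1 / 2) * ∑ a, |π' s a - π s a|)) +
          (∑ s, ∑ a, dm s * π s a * ((1 / 2) * ∑ s', |P s a s' - Pm s a s'|))) := by
  have hγ' : (0:ℝ) < 1 - γ := by linarith
  -- Step 1: dm is nonnegative
  have hdm0 : ∀ s, 0 ≤ dm s := by
    by_contra h
    push_neg at h
    obtain ⟨s₁, hs₁⟩ := h
    set N := Finset.univ.filter (fun s => dm s < 0) with hN
    have hs₁N : s₁ ∈ N := by simp [hN, hs₁]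
    have hsumneg : ∑ s ∈ N, dm s < 0 := by
      apply Finset.sum_neg
      · intro i hi
        simp [hN] at hi
        exact hi
      · exact ⟨s₁, hs₁N⟩
    -- sum the fixed point equation over N
    have key : ∑ s ∈ N, dm s =
        (1 - γ) * ∑ s ∈ N, μ s +
        γ * ∑ s₀, ∑ a, dm s₀ * π s₀ a * (∑ s ∈ N, Pm s₀ a s) := by
      calc ∑ s ∈ N, dm s
          = ∑ s ∈ N, ((1 - γ) * μ s + γ * ∑ s₀, ∑ a, dm s₀ * π s₀ a * Pm s₀ a s) := by
            exact Finset.sum_congr rfl (fun s _ => hdm s)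
        _ = (1 - γ) * ∑ s ∈ N, μ s +
            γ * ∑ s ∈ N, ∑ s₀, ∑ a, dm s₀ * π s₀ a * Pm s₀ a s := by
            rw [Finset.sum_add_distrib, Finset.mul_sum, Finset.mul_sum]
        _ = (1 - γ) * ∑ s ∈ N, μ s +
            γ * ∑ s₀, ∑ a, dm s₀ * π s₀ a * (∑ s ∈ N, Pm s₀ a s) := by
            congr 1
            congr 1
            rw [Finset.sum_comm]
            apply Finset.sum_congr rfl
            intro s₀ _
            rw [Finset.sum_comm]
            apply Finset.sum_congr rfl
            intro a _
            rw [Finset.mul_sum]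
    have hlow : ∀ s₀, ∀ a : A, min (dm s₀) 0 * π s₀ a ≤ dm s₀ * π s₀ a * (∑ s ∈ N, Pm s₀ a s) := by
      intro s₀ a
      have hc0 : 0 ≤ ∑ s ∈ N, Pm s₀ a s :=
        Finset.sum_nonneg (fun s _ => hPm0 s₀ a s)
      have hc1 : ∑ s ∈ N, Pm s₀ a s ≤ 1 := by
        rw [← hPm1 s₀ a]
        exact Finset.sum_le_sum_of_subset_of_nonneg (Finset.subset_univ N)
          (fun s _ _ => hPm0 s₀ a s)
      rcases le_or_gt 0 (dm s₀) with hd | hd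
      · have : min (dm s₀) 0 * π s₀ a ≤ 0 :=
          mul_nonpos_of_nonpos_of_nonneg (min_le_right _ _) (hπ0 s₀ a)
        have h2 : 0 ≤ dm s₀ * π s₀ a * (∑ s ∈ N, Pm s₀ a s) :=
          mul_nonneg (mul_nonneg hd (hπ0 s₀ a)) hc0
        linarith
      · have hmin : min (dm s₀) 0 = dm s₀ := min_eq_left hd.le
        rw [hmin]
        have hnp : dm s₀ * π s₀ a ≤ 0 :=
          mul_nonpos_of_nonpos_of_nonneg hd.le (hπ0 s₀ a)
        nlinarith
    have hminsum : ∑ s₀, min (dm s₀) 0 = ∑ s ∈ N, dm s := by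
      rw [← Finset.sum_filter_add_sum_filter_not Finset.univ (fun s => dm s < 0)
        (fun s₀ => min (dm s₀) 0)]
      have h1 : ∑ s ∈ N, min (dm s) 0 = ∑ s ∈ N, dm s := by
        apply Finset.sum_congr rfl
        intro s hs
        simp [hN] at hs
        exact min_eq_left hs.le
      have h2 : ∑ s ∈ Finset.univ.filter (fun s => ¬ dm s < 0), min (dm s) 0 = 0 := by
        apply Finset.sum_eq_zero
        intro s hs
        simp at hs
        exact min_eq_right hs
      rw [hN] at h1 ⊢
      rw [h1, h2, add_zero]
    have hbig : ∑ s ∈ N, dm s ≤ ∑ s₀, ∑ a, dm s₀ * π s₀ a * (∑ s ∈ N, Pm s₀ a s) := by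
      calc ∑ s ∈ N, dm s = ∑ s₀, min (dm s₀) 0 := hminsum.symm
        _ = ∑ s₀, (min (dm s₀) 0) * ∑ a, π s₀ a := by
            apply Finset.sum_congr rfl; intro s₀ _; rw [hπ1 s₀, mul_one]
        _ = ∑ s₀, ∑ a, min (dm s₀) 0 * π s₀ a := by
            apply Finset.sum_congr rfl; intro s₀ _; rw [Finset.mul_sum]
        _ ≤ ∑ s₀, ∑ a, dm s₀ * π s₀ a * (∑ s ∈ N, Pm s₀ a s) := by
            apply Finset.sum_le_sum; intro s₀ _
            apply Finset.sum_le_sum; intro a _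
            exact hlow s₀ a
    have hμN : 0 ≤ ∑ s ∈ N, μ s := Finset.sum_nonneg (fun s _ => hμ0 s)
    nlinarith [key, hbig, hμN, hsumneg]
  -- Step 2: main estimate
  set Bπ := ∑ s₀, ∑ a, dm s₀ * |π' s₀ a - π s₀ a| with hBπ
  set BP := ∑ s₀, ∑ a, dm s₀ * π s₀ a * (∑ s, |P s₀ a s - Pm s₀ a s|) with hBP
  set E := ∑ s, |d' s - dm s| with hE
  have he : ∀ s, d' s - dm s =
      γ * ∑ s₀, ∑ a, ((d' s₀ - dm s₀) * (π' s₀ a * P s₀ a s)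
        + dm s₀ * ((π' s₀ a - π s₀ a) * P s₀ a s)
        + dm s₀ * (π s₀ a * (P s₀ a s - Pm s₀ a s))) := by
    intro s
    rw [hd' s, hdm s]
    have : ∑ s₀, ∑ a, ((d' s₀ - dm s₀) * (π' s₀ a * P s₀ a s)
        + dm s₀ * ((π' s₀ a - π s₀ a) * P s₀ a s)
        + dm s₀ * (π s₀ a * (P s₀ a s - Pm s₀ a s)))
        = (∑ s₀, ∑ a, d' s₀ * π' s₀ a * P s₀ a s)
          - ∑ s₀, ∑ a, dm s₀ * π s₀ a * Pm s₀ a s := by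
      rw [← Finset.sum_sub_distrib]
      apply Finset.sum_congr rfl
      intro s₀ _
      rw [← Finset.sum_sub_distrib]
      apply Finset.sum_congr rfl
      intro a _
      ring
    rw [this]
    ring
  have habs : ∀ s, |d' s - dm s| ≤
      γ * ∑ s₀, ∑ a, (|d' s₀ - dm s₀| * (π' s₀ a * P s₀ a s)
        + dm s₀ * (|π' s₀ a - π s₀ a| * P s₀ a s)
        + dm s₀ * (π s₀ a * |P s₀ a s - Pm s₀ a s|)) := by
    intro s
    rw [he s, abs_mul, abs_of_nonneg hγ0]
    apply mul_le_mul_of_nonneg_left _ hγ0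
    calc |∑ s₀, ∑ a, ((d' s₀ - dm s₀) * (π' s₀ a * P s₀ a s)
          + dm s₀ * ((π' s₀ a - π s₀ a) * P s₀ a s)
          + dm s₀ * (π s₀ a * (P s₀ a s - Pm s₀ a s)))|
        ≤ ∑ s₀, |∑ a, ((d' s₀ - dm s₀) * (π' s₀ a * P s₀ a s)
          + dm s₀ * ((π' s₀ a - π s₀ a) * P s₀ a s)
          + dm s₀ * (π s₀ a * (P s₀ a s - Pm s₀ a s)))| :=
          Finset.abs_sum_le_sum_abs _ _
      _ ≤ ∑ s₀, ∑ a, |(d' s₀ - dm s₀) * (π' s₀ a * P s₀ a s)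
          + dm s₀ * ((π' s₀ a - π s₀ a) * P s₀ a s)
          + dm s₀ * (π s₀ a * (P s₀ a s - Pm s₀ a s))| := by
          apply Finset.sum_le_sum; intro s₀ _
          exact Finset.abs_sum_le_sum_abs _ _
      _ ≤ ∑ s₀, ∑ a, (|d' s₀ - dm s₀| * (π' s₀ a * P s₀ a s)
          + dm s₀ * (|π' s₀ a - π s₀ a| * P s₀ a s)
          + dm s₀ * (π s₀ a * |P s₀ a s - Pm s₀ a s|)) := by
          apply Finset.sum_le_sum; intro s₀ _
          apply Finset.sum_le_sum; intro a _
          have h1 : |(d' s₀ - dm s₀) * (π' s₀ a * P s₀ a s)|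
              = |d' s₀ - dm s₀| * (π' s₀ a * P s₀ a s) := by
            rw [abs_mul, abs_of_nonneg (mul_nonneg (hπ'0 s₀ a) (hP0 s₀ a s))]
          have h2 : |dm s₀ * ((π' s₀ a - π s₀ a) * P s₀ a s)|
              = dm s₀ * (|π' s₀ a - π s₀ a| * P s₀ a s) := by
            rw [abs_mul, abs_mul, abs_of_nonneg (hdm0 s₀), abs_of_nonneg (hP0 s₀ a s)]
          have h3 : |dm s₀ * (π s₀ a * (P s₀ a s - Pm s₀ a s))|
              = dm s₀ * (π s₀ a * |P s₀ a s - Pm s₀ a s|) := by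
            rw [abs_mul, abs_mul, abs_of_nonneg (hdm0 s₀), abs_of_nonneg (hπ0 s₀ a)]
          calc |(d' s₀ - dm s₀) * (π' s₀ a * P s₀ a s)
              + dm s₀ * ((π' s₀ a - π s₀ a) * P s₀ a s)
              + dm s₀ * (π s₀ a * (P s₀ a s - Pm s₀ a s))|
              ≤ |(d' s₀ - dm s₀) * (π' s₀ a * P s₀ a s)
                + dm s₀ * ((π' s₀ a - π s₀ a) * P s₀ a s)|
                + |dm s₀ * (π s₀ a * (P s₀ a s - Pm s₀ a s))| := abs_add_le _ _
            _ ≤ |(d' s₀ - dm s₀) * (π' s₀ a * P s₀ a s)|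
                + |dm s₀ * ((π' s₀ a - π s₀ a) * P s₀ a s)|
                + |dm s₀ * (π s₀ a * (P s₀ a s - Pm s₀ a s))| := by
                have := abs_add_le ((d' s₀ - dm s₀) * (π' s₀ a * P s₀ a s))
                  (dm s₀ * ((π' s₀ a - π s₀ a) * P s₀ a s))
                linarith
            _ = |d' s₀ - dm s₀| * (π' s₀ a * P s₀ a s)
                + dm s₀ * (|π' s₀ a - π s₀ a| * P s₀ a s)
                + dm s₀ * (π s₀ a * |P s₀ a s - Pm s₀ a s|) := by
                rw [h1, h2, h3]
  -- sum habs over s and compute the three pieces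
  have hsum : E ≤ γ * (E + Bπ + BP) := by
    have hstep : E ≤ γ * ∑ s, ∑ s₀, ∑ a, (|d' s₀ - dm s₀| * (π' s₀ a * P s₀ a s)
        + dm s₀ * (|π' s₀ a - π s₀ a| * P s₀ a s)
        + dm s₀ * (π s₀ a * |P s₀ a s - Pm s₀ a s|)) := by
      rw [hE, Finset.mul_sum]
      exact Finset.sum_le_sum (fun s _ => habs s)
    have hcomp : ∑ s, ∑ s₀, ∑ a, (|d' s₀ - dm s₀| * (π' s₀ a * P s₀ a s)
        + dm s₀ * (|π' s₀ a - π s₀ a| * P s₀ a s)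
        + dm s₀ * (π s₀ a * |P s₀ a s - Pm s₀ a s|)) = E + Bπ + BP := by
      rw [Finset.sum_comm]
      have : ∀ s₀ : S, ∑ s, ∑ a, (|d' s₀ - dm s₀| * (π' s₀ a * P s₀ a s)
          + dm s₀ * (|π' s₀ a - π s₀ a| * P s₀ a s)
          + dm s₀ * (π s₀ a * |P s₀ a s - Pm s₀ a s|))
          = |d' s₀ - dm s₀| + (∑ a, dm s₀ * |π' s₀ a - π s₀ a|)
            + ∑ a, dm s₀ * π s₀ a * (∑ s, |P s₀ a s - Pm s₀ a s|) := by
        intro s₀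
        rw [Finset.sum_comm]
        have : ∀ a : A, ∑ s, (|d' s₀ - dm s₀| * (π' s₀ a * P s₀ a s)
            + dm s₀ * (|π' s₀ a - π s₀ a| * P s₀ a s)
            + dm s₀ * (π s₀ a * |P s₀ a s - Pm s₀ a s|))
            = |d' s₀ - dm s₀| * π' s₀ a + dm s₀ * |π' s₀ a - π s₀ a|
              + dm s₀ * π s₀ a * (∑ s, |P s₀ a s - Pm s₀ a s|) := by
          intro a
          rw [Finset.sum_add_distrib, Finset.sum_add_distrib]
          have e1 : ∑ s, |d' s₀ - dm s₀| * (π' s₀ a * P s₀ a s)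
              = |d' s₀ - dm s₀| * π' s₀ a := by
            rw [← Finset.mul_sum]
            have : ∑ s, π' s₀ a * P s₀ a s = π' s₀ a := by
              rw [← Finset.mul_sum, hP1 s₀ a, mul_one]
            rw [this]
          have e2 : ∑ s, dm s₀ * (|π' s₀ a - π s₀ a| * P s₀ a s)
              = dm s₀ * |π' s₀ a - π s₀ a| := by
            rw [← Finset.mul_sum]
            have : ∑ s, |π' s₀ a - π s₀ a| * P s₀ a s = |π' s₀ a - π s₀ a| := by
              rw [← Finset.mul_sum, hP1 s₀ a, mul_one]
            rw [this]
          have e3 : ∑ s, dm s₀ * (π s₀ a * |P s₀ a s - Pm s₀ a s|)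
              = dm s₀ * π s₀ a * (∑ s, |P s₀ a s - Pm s₀ a s|) := by
            rw [← Finset.mul_sum, ← Finset.mul_sum, mul_assoc]
          rw [e1, e2, e3]
        rw [Finset.sum_congr rfl (fun a _ => this a)]
        have h4 : ∑ a, |d' s₀ - dm s₀| * π' s₀ a = |d' s₀ - dm s₀| := by
          rw [← Finset.mul_sum, hπ'1 s₀, mul_one]
        rw [Finset.sum_add_distrib, Finset.sum_add_distrib, h4]
      rw [Finset.sum_congr rfl (fun s₀ _ => this s₀)]
      rw [Finset.sum_add_distrib, Finset.sum_add_distrib]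
    rw [hcomp] at hstep
    exact hstep
  -- conclude
  have hRHS : (2 * γ / (1 - γ)) *
      ((∑ s, dm s * ((1 / 2) * ∑ a, |π' s a - π s a|)) +
        (∑ s, ∑ a, dm s * π s a * ((1 / 2) * ∑ s', |P s a s' - Pm s a s'|)))
      = γ / (1 - γ) * (Bπ + BP) := by
    have e1 : ∑ s, dm s * ((1 / 2) * ∑ a, |π' s a - π s a|) = (1/2) * Bπ := by
      rw [hBπ, Finset.mul_sum]
      apply Finset.sum_congr rfl
      intro s _
      rw [Finset.mul_sum, Finset.mul_sum, Finset.mul_sum]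
      apply Finset.sum_congr rfl
      intro a _
      ring
    have e2 : ∑ s, ∑ a, dm s * π s a * ((1 / 2) * ∑ s', |P s a s' - Pm s a s'|)
        = (1/2) * BP := by
      rw [hBP, Finset.mul_sum]
      apply Finset.sum_congr rfl
      intro s _
      rw [Finset.mul_sum]
      apply Finset.sum_congr rfl
      intro a _
      ring
    rw [e1, e2]
    field_simp
  rw [hRHS]
  rw [div_mul_eq_mul_div, le_div_iff₀ hγ']
  nlinarith [hsum]
end

section
/- Importance-sampling rewrite with error term: for a fixed state s, policies π, π' with π(a|s) > 0 for all a, and bounded δ(s,a,s'), one has Σ_a (π'(a|s) − π(a|s)) E_{s'∼P}[δ(s,a,s')] ≤ E_{a∼π, s'∼P_m}[((π'(a|s)/π(a|s)) − 1) δ(s,a,s')] + 4 ε_m ε_π δ^max, where ε_π = max_s D_TV(π'‖π), ε_m = max_{s,a} D_TV(P‖P_m), δ^max = max_{s,a,s'}|δ(s,a,s')|, with the symmetric lower bound as well. -/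
/-- Importance-sampling rewrite with error term: two-sided bound with
`4 ε_m ε_π δ^max` correction. -/
theorem stmt8 {S A : Type*} [Fintype S] [Fintype A] [Nonempty S] [Nonempty A]
    (π π' : S → A → ℝ)
    (hπpos : ∀ s a, 0 < π s a) (hπ1 : ∀ s, ∑ a, π s a = 1)
    (hπ'0 : ∀ s a, 0 ≤ π' s a) (hπ'1 : ∀ s, ∑ a, π' s a = 1)
    (P Pm : S → A → S → ℝ)
    (hP0 : ∀ s a s', 0 ≤ P s a s') (hP1 : ∀ s a, ∑ s', P s a s' = 1)
    (hPm0 : ∀ s a s', 0 ≤ Pm s a s') (hPm1 : ∀ s a, ∑ s', Pm s a s' = 1)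
    (δ : S → A → S → ℝ) (s : S)
    (εpi εm δmax : ℝ)
    (hεpi : εpi = Finset.univ.sup' Finset.univ_nonempty
      (fun s₀ : S => (1 / 2) * ∑ a, |π' s₀ a - π s₀ a|))
    (hεm : εm = Finset.univ.sup' Finset.univ_nonempty
      (fun p : S × A => (1 / 2) * ∑ s', |P p.1 p.2 s' - Pm p.1 p.2 s'|))
    (hδmax : δmax = Finset.univ.sup' Finset.univ_nonempty
      (fun t : S × A × S => |δ t.1 t.2.1 t.2.2|)) :
    (∑ a, (π' s a - π s a) * ∑ s', P s a s' * δ s a s' ≤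
        (∑ a, π s a * ∑ s', Pm s a s' * ((π' s a / π s a - 1) * δ s a s')) +
          4 * εm * εpi * δmax) ∧
      ((∑ a, π s a * ∑ s', Pm s a s' * ((π' s a / π s a - 1) * δ s a s')) -
          4 * εm * εpi * δmax ≤
        ∑ a, (π' s a - π s a) * ∑ s', P s a s' * δ s a s') := by

  have hδmax_ge : ∀ s₀ a s', |δ s₀ a s'| ≤ δmax := by
    intro s₀ a s'
    rw [hδmax]
    exact Finset.le_sup' (fun t : S × A × S => |δ t.1 t.2.1 t.2.2|) (Finset.mem_univ (s₀, a, s'))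
  have hδ0 : 0 ≤ δmax :=
    le_trans (abs_nonneg _)
      (hδmax_ge (Classical.arbitrary S) (Classical.arbitrary A) (Classical.arbitrary S))
  have hεm_ge : ∀ s₀ a, ∑ s', |P s₀ a s' - Pm s₀ a s'| ≤ 2 * εm := by
    intro s₀ a
    have h : (1/2 : ℝ) * ∑ s', |P s₀ a s' - Pm s₀ a s'| ≤ εm := by
      rw [hεm]; exact Finset.le_sup' (fun p : S × A => (1/2 : ℝ) * ∑ s', |P p.1 p.2 s' - Pm p.1 p.2 s'|) (Finset.mem_univ (s₀, a))
    linarith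
  have hεpi_ge : ∑ a, |π' s a - π s a| ≤ 2 * εpi := by
    have h : (1/2 : ℝ) * ∑ a, |π' s a - π s a| ≤ εpi := by
      rw [hεpi]; exact Finset.le_sup' (fun s₀ : S => (1/2 : ℝ) * ∑ a, |π' s₀ a - π s₀ a|) (Finset.mem_univ s)
    linarith
  have hεm0 : 0 ≤ εm := by
    have h1 := hεm_ge (Classical.arbitrary S) (Classical.arbitrary A)
    have h2 : (0:ℝ) ≤ ∑ s', |P (Classical.arbitrary S) (Classical.arbitrary A) s'
        - Pm (Classical.arbitrary S) (Classical.arbitrary A) s'| :=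
      Finset.sum_nonneg fun _ _ => abs_nonneg _
    linarith
  have hεpi0 : 0 ≤ εpi := by
    have h2 : (0:ℝ) ≤ ∑ a, |π' s a - π s a| := Finset.sum_nonneg fun _ _ => abs_nonneg _
    linarith [hεpi_ge]
  have hmain : ∑ a, π s a * ∑ s', Pm s a s' * ((π' s a / π s a - 1) * δ s a s')
      = ∑ a, (π' s a - π s a) * ∑ s', Pm s a s' * δ s a s' := by
    apply Finset.sum_congr rfl
    intro a _
    rw [Finset.mul_sum, Finset.mul_sum]
    apply Finset.sum_congr rfl
    intro s' _
    have hne : π s a ≠ 0 := (hπpos s a).ne'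
    field_simp
  have hdiff : ∑ a, (π' s a - π s a) * ∑ s', P s a s' * δ s a s'
      - ∑ a, (π' s a - π s a) * ∑ s', Pm s a s' * δ s a s'
      = ∑ a, (π' s a - π s a) * ∑ s', (P s a s' - Pm s a s') * δ s a s' := by
    rw [← Finset.sum_sub_distrib]
    apply Finset.sum_congr rfl
    intro a _
    rw [← mul_sub, ← Finset.sum_sub_distrib]
    congr 1
    apply Finset.sum_congr rfl
    intro s' _
    ring
  have habs : |∑ a, (π' s a - π s a) * ∑ s', (P s a s' - Pm s a s') * δ s a s'|
      ≤ 4 * εm * εpi * δmax := by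
    calc |∑ a, (π' s a - π s a) * ∑ s', (P s a s' - Pm s a s') * δ s a s'|
        ≤ ∑ a, |(π' s a - π s a) * ∑ s', (P s a s' - Pm s a s') * δ s a s'| :=
          Finset.abs_sum_le_sum_abs _ _
      _ ≤ ∑ a, |π' s a - π s a| * (2 * εm * δmax) := by
          apply Finset.sum_le_sum
          intro a _
          rw [abs_mul]
          apply mul_le_mul_of_nonneg_left _ (abs_nonneg _)
          calc |∑ s', (P s a s' - Pm s a s') * δ s a s'|
              ≤ ∑ s', |(P s a s' - Pm s a s') * δ s a s'| := Finset.abs_sum_le_sum_abs _ _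
            _ ≤ ∑ s', |P s a s' - Pm s a s'| * δmax := by
                apply Finset.sum_le_sum
                intro s' _
                rw [abs_mul]
                exact mul_le_mul_of_nonneg_left (hδmax_ge s a s') (abs_nonneg _)
            _ = (∑ s', |P s a s' - Pm s a s'|) * δmax := by rw [Finset.sum_mul]
            _ ≤ 2 * εm * δmax := mul_le_mul_of_nonneg_right (hεm_ge s a) hδ0
      _ = (∑ a, |π' s a - π s a|) * (2 * εm * δmax) := by rw [Finset.sum_mul]
      _ ≤ 2 * εpi * (2 * εm * δmax) :=
          mul_le_mul_of_nonneg_right hεpi_ge (by positivity)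
      _ = 4 * εm * εpi * δmax := by ring
  rw [hmain]
  obtain ⟨h1, h2⟩ := abs_le.mp habs
  constructor
  · linarith
  · linarith
end

section
/- Model-based performance difference bound (Theorem 4.1): for arbitrary policies π, π' and learned dynamics P_m, the true return difference satisfies |ΔJ(π,π') − L^π_m(π')/(1-γ)| ≤ 4 δ^max ε / (1-γ), where L^π_m(π') = E_{s∼d^π_m, a∼π}[(π'(a|s)/π(a|s)) A^π_m(s,a)], δ^max = max_{s,a,s'} |r(s,a,s') + γV^π_m(s') − V^π_m(s)|, ε = ε_π ε_m + (γ/(1-γ))(ε_π² + 2 ε_π ε_m), ε_π = max_s D_TV(π'(·|s)‖π(·|s)), ε_m = max_{s,a} D_TV(P(·|s,a)‖P_m(·|s,a)). -/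
/-!
Write `δ(s, a, s') = r s a s' + γ Vm s' - Vm s` and `A_Q(s, a) = E_{s' ∼ Q(s, a)} δ`. Telescoping
against the discounted occupancies `d'`, `d` of `π'`, `π` under the true dynamics `P` (the performance
difference lemma) gives `(1 - γ)(J' - J) = E_{d' π'} A_P - E_{d π} A_P`, while `L = E_{dm π'} A_Pm` and
`E_π A_Pm = 0` because `Vm` solves the model Bellman equation. The error `(1 - γ)(J' - J) - L` then splits
into three sums, each weighted by a product of two small factors:
`(π' - π)(A_P - A_Pm)`, `(d' - dm)(π' - π)` and `(d' - d)(A_P - A_Pm)`. Here `|A_P - A_Pm| ≤ 2 εm δmax`,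
and two occupancies of kernels whose rows are `c`-close in `ℓ¹` are `γ c / (1 - γ)`-close in `ℓ¹`.
-/

open Finset

section MDP

variable {S T A : Type*} [Fintype S] [Fintype T] [Fintype A]

structure IsStochastic (K : T → S → ℝ) : Prop where
  nonneg : ∀ t s, 0 ≤ K t s
  sum_eq_one : ∀ t, ∑ s, K t s = 1

lemma abs_sum_mul_le (c w : S → ℝ) {B : ℝ} (hw : ∀ s, |w s| ≤ B) :
    |∑ s, c s * w s| ≤ (∑ s, |c s|) * B :=
  calc |∑ s, c s * w s| ≤ ∑ s, |c s| * |w s| := by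
        simpa only [abs_mul] using abs_sum_le_sum_abs (fun s => c s * w s) univ
    _ ≤ ∑ s, |c s| * B := by gcongr with s; exact hw s
    _ = (∑ s, |c s|) * B := (sum_mul ..).symm

lemma sum_abs_sum_mul_le (x : T → ℝ) (D : T → S → ℝ) {c : ℝ} (hD : ∀ t, ∑ s, |D t s| ≤ c) :
    ∑ s, |∑ t, x t * D t s| ≤ (∑ t, |x t|) * c :=
  calc ∑ s, |∑ t, x t * D t s| ≤ ∑ s, ∑ t, |x t| * |D t s| := by
        gcongr with s
        simpa only [abs_mul] using abs_sum_le_sum_abs (fun t => x t * D t s) univ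
    _ = ∑ t, |x t| * ∑ s, |D t s| := by rw [sum_comm]; simp only [mul_sum]
    _ ≤ ∑ t, |x t| * c := by gcongr with t; exact hD t
    _ = (∑ t, |x t|) * c := (sum_mul ..).symm

namespace IsStochastic

variable {K : T → S → ℝ}

omit [Fintype T] in
lemma sum_abs (hK : IsStochastic K) (t : T) : ∑ s, |K t s| = 1 := by
  simp only [abs_of_nonneg (hK.nonneg t _), hK.sum_eq_one]

lemma sum_abs_sum_mul_le (hK : IsStochastic K) (x : T → ℝ) :
    ∑ s, |∑ t, x t * K t s| ≤ ∑ t, |x t| := by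
  simpa using _root_.sum_abs_sum_mul_le x K fun t => (hK.sum_abs t).le

end IsStochastic

def IsDiscountedOccupancy (γ : ℝ) (μ : S → ℝ) (K : S → S → ℝ) (d : S → ℝ) : Prop :=
  ∀ s, d s = (1 - γ) * μ s + γ * ∑ s₀, d s₀ * K s₀ s

section Occupancy

variable {γ : ℝ} {μ : S → ℝ} {K : S → S → ℝ}

lemma exists_isDiscountedOccupancy (hγ0 : 0 ≤ γ) (hγ1 : γ < 1) (hK : IsStochastic K)
    (μ : S → ℝ) : ∃ d, IsDiscountedOccupancy γ μ K d := by
  -- `f = id - γ Kᵀ` is injective because `Kᵀ` does not increase the `ℓ¹` norm, hence surjective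
  let f : (S → ℝ) →ₗ[ℝ] (S → ℝ) := LinearMap.id - γ • Matrix.vecMulLinear (Matrix.of K)
  have hf_apply : ∀ x s, f x s = x s - γ * ∑ t, x t * K t s := fun x s => by
    simp [f, Matrix.vecMul, dotProduct]
  have hf : Function.Injective f := by
    rw [← LinearMap.ker_eq_bot, LinearMap.ker_eq_bot']
    intro x hx
    have hx' : ∀ s, x s = γ * ∑ t, x t * K t s := fun s => by
      have h := hf_apply x s
      rw [hx, Pi.zero_apply] at h
      linarith
    have hle : ∑ s, |x s| ≤ γ * ∑ s, |x s| :=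
      calc ∑ s, |x s| = γ * ∑ s, |∑ t, x t * K t s| := by
            rw [mul_sum]
            exact sum_congr rfl fun s _ => by rw [hx' s, abs_mul, abs_of_nonneg hγ0]
        _ ≤ γ * ∑ s, |x s| := mul_le_mul_of_nonneg_left (hK.sum_abs_sum_mul_le x) hγ0
    have hzero : ∑ s, |x s| = 0 :=
      le_antisymm (by nlinarith [sum_nonneg fun s (_ : s ∈ univ) => abs_nonneg (x s)])
        (sum_nonneg fun s _ => abs_nonneg _)
    funext s
    simpa using (sum_eq_zero_iff_of_nonneg fun s _ => abs_nonneg (x s)).mp hzero s (mem_univ s)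
  obtain ⟨d, hd⟩ := LinearMap.injective_iff_surjective.mp hf ((1 - γ) • μ)
  refine ⟨d, fun s => ?_⟩
  have := hf_apply d s
  rw [hd] at this
  simp only [Pi.smul_apply, smul_eq_mul] at this
  linarith

namespace IsDiscountedOccupancy

variable {d : S → ℝ}

lemma sum_abs_le (hd : IsDiscountedOccupancy γ μ K d) (hγ0 : 0 ≤ γ) (hγ1 : γ < 1)
    (hK : IsStochastic K) : ∑ s, |d s| ≤ ∑ s, |μ s| := by
  have h : ∑ s, |d s| ≤ (1 - γ) * ∑ s, |μ s| + γ * ∑ s, |d s| :=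
    calc ∑ s, |d s| ≤ ∑ s, ((1 - γ) * |μ s| + γ * |∑ s₀, d s₀ * K s₀ s|) := by
          gcongr with s
          rw [hd s]
          refine (abs_add_le _ _).trans_eq ?_
          rw [abs_mul, abs_mul, abs_of_nonneg hγ0, abs_of_nonneg (by linarith)]
      _ ≤ (1 - γ) * ∑ s, |μ s| + γ * ∑ s, |d s| := by
          rw [sum_add_distrib, ← mul_sum, ← mul_sum]
          linarith [mul_le_mul_of_nonneg_left (hK.sum_abs_sum_mul_le d) hγ0]
  nlinarith

lemma sum_abs_sub_le [Nonempty S] {K₁ K₂ : S → S → ℝ} {d₁ d₂ : S → ℝ}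
    (hd₁ : IsDiscountedOccupancy γ μ K₁ d₁) (hd₂ : IsDiscountedOccupancy γ μ K₂ d₂)
    (hγ0 : 0 ≤ γ) (hγ1 : γ < 1) (hK₂ : IsStochastic K₂) (hd₁_le : ∑ s, |d₁ s| ≤ 1) {c : ℝ}
    (hc : ∀ s, ∑ s', |K₁ s s' - K₂ s s'| ≤ c) :
    ∑ s, |d₁ s - d₂ s| ≤ γ * c / (1 - γ) := by
  have hc0 : 0 ≤ c := (sum_nonneg fun _ _ => abs_nonneg _).trans (hc (Classical.arbitrary S))
  have hsplit : ∀ s, d₁ s - d₂ s =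
      γ * ((∑ s₀, (d₁ s₀ - d₂ s₀) * K₂ s₀ s) + ∑ s₀, d₁ s₀ * (K₁ s₀ s - K₂ s₀ s)) := fun s => by
    rw [hd₁ s, hd₂ s]
    simp only [sub_mul, mul_sub, sum_sub_distrib]
    ring
  have hle : ∑ s, |d₁ s - d₂ s| ≤ γ * (∑ s, |d₁ s - d₂ s| + c) :=
    calc ∑ s, |d₁ s - d₂ s|
        ≤ γ * (∑ s, |∑ s₀, (d₁ s₀ - d₂ s₀) * K₂ s₀ s|
          + ∑ s, |∑ s₀, d₁ s₀ * (K₁ s₀ s - K₂ s₀ s)|) := by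
          rw [← sum_add_distrib, mul_sum]
          gcongr with s
          rw [hsplit s, abs_mul, abs_of_nonneg hγ0]
          exact mul_le_mul_of_nonneg_left (abs_add_le _ _) hγ0
      _ ≤ γ * (∑ s, |d₁ s - d₂ s| + c) := by
          refine mul_le_mul_of_nonneg_left (add_le_add (hK₂.sum_abs_sum_mul_le _) ?_) hγ0
          exact (sum_abs_sum_mul_le d₁ _ hc).trans (by nlinarith)
  rw [le_div_iff₀ (by linarith)]
  linarith

lemma sum_mul_sub_eq {d : S → ℝ} (hd : IsDiscountedOccupancy γ μ K d) (g : S → ℝ) :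
    ∑ s, d s * (γ * ∑ s', K s s' * g s' - g s) = -((1 - γ) * ∑ s, μ s * g s) := by
  have hflow : ∀ s', γ * ∑ s, d s * K s s' = d s' - (1 - γ) * μ s' := fun s' => by
    rw [hd s']; ring
  calc ∑ s, d s * (γ * ∑ s', K s s' * g s' - g s)
      = ∑ s', (γ * ∑ s, d s * K s s') * g s' - ∑ s, d s * g s := by
        simp only [mul_sub, sum_sub_distrib, mul_sum, sum_mul]
        rw [sum_comm]
        congr 1
        exact sum_congr rfl fun _ _ => sum_congr rfl fun _ _ => by ring
    _ = -((1 - γ) * ∑ s, μ s * g s) := by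
        simp only [hflow, sub_mul, sum_sub_distrib, mul_assoc, ← mul_sum]
        ring

end IsDiscountedOccupancy

end Occupancy

section Policy

def policyKernel (β : S → A → ℝ) (Q : S → A → S → ℝ) (s s' : S) : ℝ :=
  ∑ a, β s a * Q s a s'

lemma IsStochastic.policyKernel {β : S → A → ℝ} {Q : S → A → S → ℝ} (hβ : IsStochastic β)
    (hQ : ∀ s, IsStochastic (Q s)) : IsStochastic (policyKernel β Q) where
  nonneg s s' := sum_nonneg fun a _ => mul_nonneg (hβ.nonneg s a) ((hQ s).nonneg a s')
  sum_eq_one s := by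
    simp only [_root_.policyKernel]
    rw [sum_comm]
    simp [← mul_sum, (hQ s).sum_eq_one, hβ.sum_eq_one]

lemma sum_mul_policyKernel (β : S → A → ℝ) (Q : S → A → S → ℝ) (d : S → ℝ) (s : S) :
    ∑ s₀, d s₀ * policyKernel β Q s₀ s = ∑ s₀, ∑ a, d s₀ * β s₀ a * Q s₀ a s := by
  simp only [policyKernel, mul_sum, mul_assoc]

lemma sum_abs_policyKernel_sub_le {β₁ β₂ : S → A → ℝ} {Q₁ Q₂ : S → A → S → ℝ}
    (hβ₂ : IsStochastic β₂) (hQ₁ : ∀ s, IsStochastic (Q₁ s)) {e c : ℝ}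
    (he : ∀ s, ∑ a, |β₁ s a - β₂ s a| ≤ e) (hc : ∀ s a, ∑ s', |Q₁ s a s' - Q₂ s a s'| ≤ c)
    (s : S) : ∑ s', |policyKernel β₁ Q₁ s s' - policyKernel β₂ Q₂ s s'| ≤ e + c := by
  have hsplit : ∀ s', policyKernel β₁ Q₁ s s' - policyKernel β₂ Q₂ s s' =
      ∑ a, (β₁ s a - β₂ s a) * Q₁ s a s' + ∑ a, β₂ s a * (Q₁ s a s' - Q₂ s a s') := fun s' => by
    simp only [policyKernel, sub_mul, mul_sub, sum_sub_distrib]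
    ring
  calc ∑ s', |policyKernel β₁ Q₁ s s' - policyKernel β₂ Q₂ s s'|
      ≤ ∑ s', |∑ a, (β₁ s a - β₂ s a) * Q₁ s a s'|
        + ∑ s', |∑ a, β₂ s a * (Q₁ s a s' - Q₂ s a s')| := by
        rw [← sum_add_distrib]
        exact sum_le_sum fun s' _ => (hsplit s').symm ▸ abs_add_le _ _
    _ ≤ e + (∑ a, |β₂ s a|) * c :=
        add_le_add (((hQ₁ s).sum_abs_sum_mul_le _).trans (he s)) (sum_abs_sum_mul_le _ _ (hc s))
    _ = e + c := by rw [hβ₂.sum_abs, one_mul]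

def advantage (γ : ℝ) (Q r : S → A → S → ℝ) (f : S → ℝ) (s : S) (a : A) : ℝ :=
  ∑ s', Q s a s' * (r s a s' + γ * f s' - f s)

def IsValueFunction (γ : ℝ) (β : S → A → ℝ) (Q r : S → A → S → ℝ) (W : S → ℝ) : Prop :=
  ∀ s, W s = ∑ a, β s a * ∑ s', Q s a s' * (r s a s' + γ * W s')

variable {γ : ℝ} {Q r : S → A → S → ℝ}

omit [Fintype A] in
lemma advantage_eq {s : S} {a : A} (hQ : ∑ s', Q s a s' = 1) (f : S → ℝ) :
    advantage γ Q r f s a = ∑ s', Q s a s' * (r s a s' + γ * f s') - f s := by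
  simp only [advantage, mul_sub, sum_sub_distrib, ← sum_mul, hQ, one_mul]

lemma sum_mul_advantage_eq_zero {β : S → A → ℝ} {W : S → ℝ} {s : S} (hβ : ∑ a, β s a = 1)
    (hQ : ∀ a, ∑ s', Q s a s' = 1)
    (hW : W s = ∑ a, β s a * ∑ s', Q s a s' * (r s a s' + γ * W s')) :
    ∑ a, β s a * advantage γ Q r W s a = 0 := by
  simp only [advantage_eq (hQ _), mul_sub, sum_sub_distrib, ← sum_mul, hβ, one_mul, ← hW, sub_self]

omit [Fintype A] in
lemma advantage_sub_advantage {s : S} {a : A} (hQ : ∑ s', Q s a s' = 1) (f g : S → ℝ) :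
    advantage γ Q r f s a - advantage γ Q r g s a =
      γ * ∑ s', Q s a s' * (f s' - g s') - (f s - g s) :=
  calc advantage γ Q r f s a - advantage γ Q r g s a
      = ∑ s', (γ * (Q s a s' * (f s' - g s')) - Q s a s' * (f s - g s)) := by
        rw [advantage, advantage, ← sum_sub_distrib]
        exact sum_congr rfl fun _ _ => by ring
    _ = γ * ∑ s', Q s a s' * (f s' - g s') - (f s - g s) := by
        rw [sum_sub_distrib, ← mul_sum, ← sum_mul, hQ, one_mul]

lemma sum_mul_sum_mul_eq_policyKernel (β : S → A → ℝ) (Q : S → A → S → ℝ) (g : S → ℝ) (s : S) :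
    ∑ a, β s a * ∑ s', Q s a s' * g s' = ∑ s', policyKernel β Q s s' * g s' := by
  simp only [policyKernel, mul_sum, sum_mul, mul_assoc]
  exact sum_comm

lemma sum_mul_advantage_eq {β : S → A → ℝ} {W : S → ℝ} {s : S} (hβ : ∑ a, β s a = 1)
    (hQ : ∀ a, ∑ s', Q s a s' = 1)
    (hW : W s = ∑ a, β s a * ∑ s', Q s a s' * (r s a s' + γ * W s')) (f : S → ℝ) :
    ∑ a, β s a * advantage γ Q r f s a =
      γ * ∑ s', policyKernel β Q s s' * (f s' - W s') - (f s - W s) :=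
  calc ∑ a, β s a * advantage γ Q r f s a
      = ∑ a, β s a * (advantage γ Q r f s a - advantage γ Q r W s a) := by
        rw [← sub_zero (∑ a, β s a * advantage γ Q r f s a),
          ← sum_mul_advantage_eq_zero hβ hQ hW, ← sum_sub_distrib]
        simp only [mul_sub]
    _ = γ * ∑ s', policyKernel β Q s s' * (f s' - W s') - (f s - W s) := by
        simp only [advantage_sub_advantage (hQ _), mul_sub, sum_sub_distrib, ← sum_mul, hβ,
          one_mul, mul_left_comm _ γ, ← mul_sum, sum_mul_sum_mul_eq_policyKernel]

lemma IsDiscountedOccupancy.performance_difference {β : S → A → ℝ} {W d μ : S → ℝ}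
    (hd : IsDiscountedOccupancy γ μ (policyKernel β Q) d) (hβ : ∀ s, ∑ a, β s a = 1)
    (hQ : ∀ s a, ∑ s', Q s a s' = 1) (hW : IsValueFunction γ β Q r W) (f : S → ℝ) :
    ∑ s, d s * ∑ a, β s a * advantage γ Q r f s a =
      (1 - γ) * (∑ s, μ s * W s - ∑ s, μ s * f s) := by
  simp only [sum_mul_advantage_eq (hβ _) (hQ _) (hW _)]
  rw [hd.sum_mul_sub_eq fun s => f s - W s]
  simp only [mul_sub, sum_sub_distrib]
  ring

omit [Fintype A] in
lemma abs_advantage_le {f : S → ℝ} {s : S} {a : A} {δ : ℝ} (hQ : IsStochastic (Q s))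
    (hδ : ∀ s', |r s a s' + γ * f s' - f s| ≤ δ) : |advantage γ Q r f s a| ≤ δ :=
  (abs_sum_mul_le _ _ hδ).trans_eq (by rw [hQ.sum_abs, one_mul])

omit [Fintype A] in
lemma abs_advantage_sub_le [Nonempty S] {Q₁ Q₂ : S → A → S → ℝ} {f : S → ℝ} {s : S} {a : A}
    {c δ : ℝ} (hc : ∑ s', |Q₁ s a s' - Q₂ s a s'| ≤ c)
    (hδ : ∀ s', |r s a s' + γ * f s' - f s| ≤ δ) :
    |advantage γ Q₁ r f s a - advantage γ Q₂ r f s a| ≤ c * δ := by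
  have hδ0 : 0 ≤ δ := (abs_nonneg _).trans (hδ (Classical.arbitrary S))
  rw [advantage, advantage, ← sum_sub_distrib]
  simp only [← sub_mul]
  exact (abs_sum_mul_le _ _ hδ).trans (mul_le_mul_of_nonneg_right hc hδ0)

end Policy

lemma abs_sum_mul_sum_mul_le (x : S → ℝ) (y z : S → A → ℝ) {X Y Z : ℝ} (hx : ∑ s, |x s| ≤ X)
    (hy : ∀ s, ∑ a, |y s a| ≤ Y) (hz : ∀ s a, |z s a| ≤ Z) (hY : 0 ≤ Y) (hZ : 0 ≤ Z) :
    |∑ s, x s * ∑ a, y s a * z s a| ≤ X * (Y * Z) :=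
  (abs_sum_mul_le x _ fun s =>
    (abs_sum_mul_le _ _ (hz s)).trans (mul_le_mul_of_nonneg_right (hy s) hZ)).trans
    (mul_le_mul_of_nonneg_right hx (mul_nonneg hY hZ))

lemma abs_sum_mul_sum_mul_sub_le [Nonempty S] [Nonempty A] {π π' : S → A → ℝ} {d d' dm : S → ℝ}
    {AP Am : S → A → ℝ} {e δ η Δ Δm : ℝ} (hπ : IsStochastic π)
    (hπAm : ∀ s, ∑ a, π s a * Am s a = 0) (hd' : ∑ s, |d' s| ≤ 1)
    (hd : ∑ s, |d' s - d s| ≤ Δ) (hdm : ∑ s, |d' s - dm s| ≤ Δm)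
    (hπ' : ∀ s, ∑ a, |π' s a - π s a| ≤ e) (hAm : ∀ s a, |Am s a| ≤ δ)
    (hAP : ∀ s a, |AP s a - Am s a| ≤ η) :
    |(∑ s, d' s * ∑ a, π' s a * AP s a) - (∑ s, d s * ∑ a, π s a * AP s a)
        - ∑ s, dm s * ∑ a, π' s a * Am s a| ≤ e * η + Δm * (e * δ) + Δ * η := by
  obtain ⟨s₀⟩ := ‹Nonempty S›
  obtain ⟨a₀⟩ := ‹Nonempty A›
  have he : 0 ≤ e := (sum_nonneg fun _ _ => abs_nonneg _).trans (hπ' s₀)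
  have hδ : 0 ≤ δ := (abs_nonneg _).trans (hAm s₀ a₀)
  have hη : 0 ≤ η := (abs_nonneg _).trans (hAP s₀ a₀)
  have hsplit : (∑ s, d' s * ∑ a, π' s a * AP s a) - (∑ s, d s * ∑ a, π s a * AP s a)
        - ∑ s, dm s * ∑ a, π' s a * Am s a =
      (∑ s, d' s * ∑ a, (π' s a - π s a) * (AP s a - Am s a))
        + (∑ s, (d' s - dm s) * ∑ a, (π' s a - π s a) * Am s a)
        + ∑ s, (d' s - d s) * ∑ a, π s a * (AP s a - Am s a) := by
    simp only [← sum_sub_distrib, ← sum_add_distrib]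
    refine sum_congr rfl fun s _ => ?_
    simp only [sub_mul, mul_sub, sum_sub_distrib]
    linear_combination (d' s - d s - dm s) * hπAm s
  calc _ ≤ 1 * (e * η) + Δm * (e * δ) + Δ * (1 * η) := by
        rw [hsplit]
        refine (abs_add_three _ _ _).trans (add_le_add_three ?_ ?_ ?_)
        · exact abs_sum_mul_sum_mul_le _ _ _ hd' hπ' hAP he hη
        · exact abs_sum_mul_sum_mul_le _ _ _ hdm hπ' hAm he hδ
        · exact abs_sum_mul_sum_mul_le _ _ _ hd (fun s => (hπ.sum_abs s).le) hAP zero_le_one hη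
    _ = e * η + Δm * (e * δ) + Δ * η := by ring

theorem abs_performance_difference_sub_surrogate_le [Nonempty S] [Nonempty A] {γ : ℝ}
    (hγ0 : 0 ≤ γ) (hγ1 : γ < 1) {π π' : S → A → ℝ} (hπ : IsStochastic π) (hπ' : IsStochastic π')
    {P Pm : S → A → S → ℝ} (hP : ∀ s, IsStochastic (P s)) (hPm : ∀ s, IsStochastic (Pm s))
    {μ : S → ℝ} (hμ : ∑ s, |μ s| ≤ 1) {r : S → A → S → ℝ} {V V' Vm dm : S → ℝ}
    (hV : IsValueFunction γ π P r V) (hV' : IsValueFunction γ π' P r V')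
    (hVm : IsValueFunction γ π Pm r Vm) (hdm : IsDiscountedOccupancy γ μ (policyKernel π Pm) dm)
    {δ εpi εm : ℝ} (hδ : ∀ s a s', |r s a s' + γ * Vm s' - Vm s| ≤ δ)
    (hεpi : ∀ s, ∑ a, |π' s a - π s a| ≤ 2 * εpi)
    (hεm : ∀ s a, ∑ s', |P s a s' - Pm s a s'| ≤ 2 * εm) :
    |(1 - γ) * (∑ s, μ s * V' s - ∑ s, μ s * V s)
        - ∑ s, dm s * ∑ a, π' s a * advantage γ Pm r Vm s a|
      ≤ 4 * δ * (εpi * εm + (γ / (1 - γ)) * (εpi ^ 2 + 2 * εpi * εm)) := by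
  obtain ⟨d', hd'⟩ := exists_isDiscountedOccupancy hγ0 hγ1 (hπ'.policyKernel hP) μ
  obtain ⟨d, hd⟩ := exists_isDiscountedOccupancy hγ0 hγ1 (hπ.policyKernel hP) μ
  have hd'_le : ∑ s, |d' s| ≤ 1 := (hd'.sum_abs_le hγ0 hγ1 (hπ'.policyKernel hP)).trans hμ
  have hP_sub : ∀ s a, ∑ s', |P s a s' - P s a s'| ≤ 0 := fun s a => by simp
  have hJ : (1 - γ) * (∑ s, μ s * V' s - ∑ s, μ s * V s) =
      (∑ s, d' s * ∑ a, π' s a * advantage γ P r Vm s a)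
        - ∑ s, d s * ∑ a, π s a * advantage γ P r Vm s a := by
    rw [hd'.performance_difference hπ'.sum_eq_one (fun s => (hP s).sum_eq_one) hV' Vm,
      hd.performance_difference hπ.sum_eq_one (fun s => (hP s).sum_eq_one) hV Vm]
    ring
  rw [hJ]
  refine (abs_sum_mul_sum_mul_sub_le hπ
    (fun s => sum_mul_advantage_eq_zero (hπ.sum_eq_one s) (fun a => (hPm s).sum_eq_one a) (hVm s))
    hd'_le
    (hd'.sum_abs_sub_le hd hγ0 hγ1 (hπ.policyKernel hP) hd'_le
      (sum_abs_policyKernel_sub_le hπ hP hεpi hP_sub))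
    (hd'.sum_abs_sub_le hdm hγ0 hγ1 (hπ.policyKernel hPm) hd'_le
      (sum_abs_policyKernel_sub_le hπ hP hεpi hεm))
    hεpi (fun s a => abs_advantage_le (hPm s) (hδ s a))
    (fun s a => abs_advantage_sub_le (hεm s a) (hδ s a))).trans_eq ?_
  field_simp
  ring

lemma sum_sum_mul_mul_div_mul {d : S → ℝ} {p q x : S → A → ℝ} (hq : ∀ s a, q s a ≠ 0) :
    ∑ s, ∑ a, d s * q s a * (p s a / q s a * x s a) = ∑ s, d s * ∑ a, p s a * x s a := by
  simp only [mul_sum]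
  exact sum_congr rfl fun s _ => sum_congr rfl fun a _ => by field_simp [hq s a]

end MDP

/-- Theorem 4.1: model-based performance difference bound
`|ΔJ(π,π') − L^π_m(π')/(1-γ)| ≤ 4 δ^max ε / (1-γ)`. -/
theorem stmt9 {S A : Type*} [Fintype S] [Fintype A] [Nonempty S] [Nonempty A]
    (γ : ℝ) (hγ0 : 0 ≤ γ) (hγ1 : γ < 1)
    (π π' : S → A → ℝ)
    (hπpos : ∀ s a, 0 < π s a) (hπ1 : ∀ s, ∑ a, π s a = 1)
    (hπ'0 : ∀ s a, 0 ≤ π' s a) (hπ'1 : ∀ s, ∑ a, π' s a = 1)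
    (P Pm : S → A → S → ℝ)
    (hP0 : ∀ s a s', 0 ≤ P s a s') (hP1 : ∀ s a, ∑ s', P s a s' = 1)
    (hPm0 : ∀ s a s', 0 ≤ Pm s a s') (hPm1 : ∀ s a, ∑ s', Pm s a s' = 1)
    (μ : S → ℝ) (hμ0 : ∀ s, 0 ≤ μ s) (hμ1 : ∑ s, μ s = 1)
    (r : S → A → S → ℝ)
    -- value functions of π, π' under true dynamics, and of π under model dynamics
    (V V' Vm : S → ℝ)
    (hV : ∀ s, V s = ∑ a, π s a * ∑ s', P s a s' * (r s a s' + γ * V s'))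
    (hV' : ∀ s, V' s = ∑ a, π' s a * ∑ s', P s a s' * (r s a s' + γ * V' s'))
    (hVm : ∀ s, Vm s = ∑ a, π s a * ∑ s', Pm s a s' * (r s a s' + γ * Vm s'))
    -- discounted stationary state distribution of π under model dynamics
    (dm : S → ℝ)
    (hdm : ∀ s, dm s = (1 - γ) * μ s + γ * ∑ s₀, ∑ a, dm s₀ * π s₀ a * Pm s₀ a s)
    (J J' L δmax εpi εm ε : ℝ)
    (hJ : J = ∑ s, μ s * V s) (hJ' : J' = ∑ s, μ s * V' s)
    (hL : L = ∑ s, ∑ a, dm s * π s a *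
      ((π' s a / π s a) * ∑ s', Pm s a s' * (r s a s' + γ * Vm s' - Vm s)))
    (hδmax : δmax = Finset.univ.sup' Finset.univ_nonempty
      (fun t : S × A × S => |r t.1 t.2.1 t.2.2 + γ * Vm t.2.2 - Vm t.1|))
    (hεpi : εpi = Finset.univ.sup' Finset.univ_nonempty
      (fun s : S => (1 / 2) * ∑ a, |π' s a - π s a|))
    (hεm : εm = Finset.univ.sup' Finset.univ_nonempty
      (fun p : S × A => (1 / 2) * ∑ s', |P p.1 p.2 s' - Pm p.1 p.2 s'|))
    (hε : ε = εpi * εm + (γ / (1 - γ)) * (εpi ^ 2 + 2 * εpi * εm)) :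
    |(J' - J) - L / (1 - γ)| ≤ 4 * δmax * ε / (1 - γ) := by
  have hδ : ∀ s a s', |r s a s' + γ * Vm s' - Vm s| ≤ δmax := fun s a s' =>
    hδmax ▸ le_sup' (fun t : S × A × S => |r t.1 t.2.1 t.2.2 + γ * Vm t.2.2 - Vm t.1|)
      (mem_univ (s, a, s'))
  have hεpi' : ∀ s, ∑ a, |π' s a - π s a| ≤ 2 * εpi := fun s => by
    linarith [hεpi ▸ le_sup' (fun s : S => (1 / 2) * ∑ a, |π' s a - π s a|) (mem_univ s)]
  have hεm' : ∀ s a, ∑ s', |P s a s' - Pm s a s'| ≤ 2 * εm := fun s a => by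
    linarith [hεm ▸ le_sup' (fun p : S × A => (1 / 2) * ∑ s', |P p.1 p.2 s' - Pm p.1 p.2 s'|)
      (mem_univ (s, a))]
  have hL' : L = ∑ s, dm s * ∑ a, π' s a * advantage γ Pm r Vm s a :=
    hL.trans (sum_sum_mul_mul_div_mul fun s a => (hπpos s a).ne')
  have key := abs_performance_difference_sub_surrogate_le (μ := μ) (dm := dm) hγ0 hγ1
    ⟨fun s a => (hπpos s a).le, hπ1⟩ ⟨hπ'0, hπ'1⟩ (fun s => ⟨hP0 s, hP1 s⟩)
    (fun s => ⟨hPm0 s, hPm1 s⟩) (by simp [abs_of_nonneg (hμ0 _), hμ1]) hV hV' hVm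
    (fun s => by rw [hdm s, sum_mul_policyKernel]) hδ hεpi' hεm'
  rw [← hJ, ← hJ', ← hL', ← hε] at key
  have h1γ : 0 < 1 - γ := by linarith
  rw [show J' - J - L / (1 - γ) = ((1 - γ) * (J' - J) - L) / (1 - γ) by field_simp,
    abs_div, abs_of_pos h1γ]
  exact div_le_div_of_nonneg_right key h1γ.le
end

section
/- Kakade–Langford performance difference lemma: for arbitrary policies π, π' in a finite discounted MDP, J(π') − J(π) = (1/(1-γ)) E_{s∼d^{π'}, a∼π'}[A^π(s,a)]. -/
/-- Kakade–Langford performance difference lemma: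
`J(π') − J(π) = (1/(1-γ)) E_{s∼d^{π'}, a∼π'}[A^π(s,a)]`. -/
theorem stmt12 {S A : Type*} [Fintype S] [Fintype A]
    (γ : ℝ) (hγ0 : 0 ≤ γ) (hγ1 : γ < 1)
    (π π' : S → A → ℝ)
    (hπ0 : ∀ s a, 0 ≤ π s a) (hπ1 : ∀ s, ∑ a, π s a = 1)
    (hπ'0 : ∀ s a, 0 ≤ π' s a) (hπ'1 : ∀ s, ∑ a, π' s a = 1)
    (P : S → A → S → ℝ)
    (hP0 : ∀ s a s', 0 ≤ P s a s') (hP1 : ∀ s a, ∑ s', P s a s' = 1)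
    (μ : S → ℝ) (hμ0 : ∀ s, 0 ≤ μ s) (hμ1 : ∑ s, μ s = 1)
    (r : S → A → S → ℝ)
    -- value functions of π and π' under the true dynamics
    (V V' : S → ℝ)
    (hV : ∀ s, V s = ∑ a, π s a * ∑ s', P s a s' * (r s a s' + γ * V s'))
    (hV' : ∀ s, V' s = ∑ a, π' s a * ∑ s', P s a s' * (r s a s' + γ * V' s'))
    -- state-action value and advantage of π
    (Q : S → A → ℝ)
    (hQ : ∀ s a, Q s a = ∑ s', P s a s' * (r s a s' + γ * V s'))
    -- discounted stationary state distribution of π'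
    (d' : S → ℝ)
    (hd' : ∀ s, d' s = (1 - γ) * μ s + γ * ∑ s₀, ∑ a, d' s₀ * π' s₀ a * P s₀ a s)
    (J J' : ℝ)
    (hJ : J = ∑ s, μ s * V s) (hJ' : J' = ∑ s, μ s * V' s) :
    J' - J = (1 / (1 - γ)) * ∑ s, d' s * ∑ a, π' s a * (Q s a - V s) := by
  have h1γ : (1 : ℝ) - γ ≠ 0 := sub_ne_zero_of_ne (by linarith)
  set D : S → ℝ := fun s => V' s - V s with hD
  -- per-state identity
  have key : ∀ s, ∑ a, π' s a * (Q s a - V s)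
      = D s - γ * ∑ a, π' s a * ∑ s', P s a s' * D s' := by
    intro s
    have e1 : ∀ a, π' s a * (Q s a - V s) + γ * (π' s a * ∑ s', P s a s' * D s')
        = π' s a * ∑ s', P s a s' * (r s a s' + γ * V' s') - π' s a * V s := by
      intro a
      rw [hQ]
      have h2 : ∑ s', P s a s' * (r s a s' + γ * V s') + γ * ∑ s', P s a s' * D s'
          = ∑ s', P s a s' * (r s a s' + γ * V' s') := by
        rw [Finset.mul_sum, ← Finset.sum_add_distrib]
        exact Finset.sum_congr rfl fun s' _ => by simp only [hD]; ring
      linear_combination π' s a * h2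
    have e2 : ∑ a, (π' s a * (Q s a - V s) + γ * (π' s a * ∑ s', P s a s' * D s'))
        = ∑ a, (π' s a * ∑ s', P s a s' * (r s a s' + γ * V' s') - π' s a * V s) :=
      Finset.sum_congr rfl fun a _ => e1 a
    rw [Finset.sum_add_distrib, Finset.sum_sub_distrib, ← Finset.mul_sum,
      ← Finset.sum_mul, hπ'1, ← hV'] at e2
    simp only [hD]
    linarith [e2]
  -- swap order of summation
  have h4 : ∑ s, d' s * ∑ a, π' s a * ∑ s', P s a s' * D s'
      = ∑ s', (∑ s, ∑ a, d' s * π' s a * P s a s') * D s' := by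
    have swap3 : ∀ (f : S → A → S → ℝ),
        ∑ s, ∑ a, ∑ s', f s a s' = ∑ s', ∑ s, ∑ a, f s a s' := by
      intro f
      calc ∑ s, ∑ a, ∑ s', f s a s'
          = ∑ s, ∑ s', ∑ a, f s a s' :=
            Finset.sum_congr rfl fun s _ => Finset.sum_comm
        _ = ∑ s', ∑ s, ∑ a, f s a s' := Finset.sum_comm
    calc ∑ s, d' s * ∑ a, π' s a * ∑ s', P s a s' * D s'
        = ∑ s, ∑ a, ∑ s', d' s * π' s a * P s a s' * D s' := by
          refine Finset.sum_congr rfl fun s _ => ?_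
          rw [Finset.mul_sum]
          refine Finset.sum_congr rfl fun a _ => ?_
          rw [Finset.mul_sum, Finset.mul_sum]
          exact Finset.sum_congr rfl fun s' _ => by ring
      _ = ∑ s', ∑ s, ∑ a, d' s * π' s a * P s a s' * D s' := swap3 _
      _ = ∑ s', (∑ s, ∑ a, d' s * π' s a * P s a s') * D s' := by
          refine Finset.sum_congr rfl fun s' _ => ?_
          rw [Finset.sum_mul]
          refine Finset.sum_congr rfl fun s _ => ?_
          rw [Finset.sum_mul]
  have h5 : ∀ t, γ * ∑ s, ∑ a, d' s * π' s a * P s a t = d' t - (1 - γ) * μ t := by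
    intro t; linarith [hd' t]
  -- main computation
  have main : ∑ s, d' s * ∑ a, π' s a * (Q s a - V s) = (1 - γ) * ∑ s, μ s * D s := by
    calc ∑ s, d' s * ∑ a, π' s a * (Q s a - V s)
        = ∑ s, (d' s * D s - γ * (d' s * ∑ a, π' s a * ∑ s', P s a s' * D s')) := by
          refine Finset.sum_congr rfl fun s _ => ?_
          rw [key s]; ring
      _ = ∑ s, d' s * D s - γ * ∑ s, d' s * ∑ a, π' s a * ∑ s', P s a s' * D s' := by
          rw [Finset.sum_sub_distrib, ← Finset.mul_sum]
      _ = ∑ s, d' s * D s - ∑ s', (γ * ∑ s, ∑ a, d' s * π' s a * P s a s') * D s' := by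
          rw [h4, Finset.mul_sum]
          congr 1
          exact Finset.sum_congr rfl fun s' _ => by ring
      _ = ∑ s, d' s * D s - ∑ s', (d' s' - (1 - γ) * μ s') * D s' := by
          congr 1
          exact Finset.sum_congr rfl fun s' _ => by rw [h5 s']
      _ = (1 - γ) * ∑ s, μ s * D s := by
          rw [Finset.mul_sum, ← Finset.sum_sub_distrib]
          exact Finset.sum_congr rfl fun s _ => by ring
  rw [main, hJ, hJ']
  field_simp
  rw [← Finset.sum_sub_distrib]
  refine Finset.sum_congr rfl fun s _ => ?_
  simp only [hD]; ring
end
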